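/- Let X be a first countable compact Hausdorff topological space with at least three points, let φ : C(X,ℂ) → C(X,ℂ) be a diameter preserving linear bijection, let g : X → X be a bijection, and let τ ∈ ℂ with |τ| = 1 be such that for every x, y ∈ X with x ≠ y, every u ∈ ℂ, and every f ∈ C(X,ℂ): if (x,y,u) ∈ T(f) then (g(x), g(y), τ·u) ∈ T(φ(f)). Then for every f ∈ C(X,ℂ), the function x ↦ φ(f)(g(x)) − τ·f(x) is constant on X. -/

import Mathlib

/-- `S(f)`: the set of two-element subsets `{x,y}` of `X` with
`|f(x) - f(y)| = diam(f(X))`. -/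
def diamSet {X : Type*} [TopologicalSpace X] (f : C(X, ℂ)) : Set (Set X) :=
  {s | ∃ x y : X, x ≠ y ∧ s = {x, y} ∧
    ‖f x - f y‖ = Metric.diam (Set.range ⇑f)}

/-- `T(f)`: the set of triples `(x,y,u)` with `|f(x) - f(y)| = diam(f(X))` and
`u = f(x) - f(y)`. -/
def diamTriple {X : Type*} [TopologicalSpace X] (f : C(X, ℂ)) : Set (X × X × ℂ) :=
  {p | ‖f p.1 - f p.2.1‖ = Metric.diam (Set.range ⇑f) ∧
    p.2.2 = f p.1 - f p.2.1}

/-- `G(s) = ⋂ { S(φ(f)) : f ∈ C(X,ℂ), s ∈ S(f) }`. -/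
def Gset {X : Type*} [TopologicalSpace X] (φ : C(X, ℂ) → C(X, ℂ)) (s : Set X) :
    Set (Set X) :=
  {t | ∀ f : C(X, ℂ), s ∈ diamSet f → t ∈ diamSet (φ f)}

/-- `H(x,y,u) = ⋂ { T(φ(f)) : f ∈ C(X,ℂ), (x,y,u) ∈ T(f) }`. -/
def Hset {X : Type*} [TopologicalSpace X] (φ : C(X, ℂ) → C(X, ℂ)) (x y : X) (u : ℂ) :
    Set (X × X × ℂ) :=
  {p | ∀ f : C(X, ℂ), (x, y, u) ∈ diamTriple f → p ∈ diamTriple (φ f)}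

/-- `φ` is diameter preserving: `diam(φ(f)(X)) = diam(f(X))` for all `f`. -/
def DiamPreserving {X : Type*} [TopologicalSpace X] (φ : C(X, ℂ) → C(X, ℂ)) : Prop :=
  ∀ f : C(X, ℂ), Metric.diam (Set.range ⇑(φ f)) = Metric.diam (Set.range ⇑f)

/-- The collection of two-element subsets of `X`. -/
abbrev TwoSet (X : Type*) := {s : Set X // ∃ a b : X, a ≠ b ∧ s = {a, b}}

/-! Fix `x ≠ y`. By hypothesis, the functional `f ↦ φ f (g x) - φ f (g y) - τ (f x - f y)`
vanishes on every `f` with `(x, y, f x - f y) ∈ T(f)`, and it is additive, so it suffices to write an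
arbitrary `f` as a difference `(f + G) - G` of two such functions. Take `G = c • p`, where `c` is
the direction of `f x - f y` and `p` is a real Urysohn-type function with `p x = D x`,
`p y = -D y`, `|p| ≤ D`. The damping `D` is chosen so small where `f` is far from the midpoint
`m = (f x + f y) / 2` that `f + G` maps `X` into a disc around `m` on whose boundary
`(f + G) x` and `(f + G) y` are antipodal. -/

section DiamTriple

universe u

variable {X : Type u} [TopologicalSpace X]

theorem mem_diamTriple_of_norm_sub_le {F : C(X, ℂ)} {x y : X} {m : ℂ} {R : ℝ}
    (hF : ∀ z, ‖F z - m‖ ≤ R) (hxy : ‖F x - F y‖ = 2 * R) :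
    (x, y, F x - F y) ∈ diamTriple F := by
  refine ⟨le_antisymm ?_ ?_, rfl⟩
  · have hbdd : Bornology.IsBounded (Set.range F) :=
      Metric.isBounded_closedBall.subset (Set.range_subset_iff.2 fun z => by
        simpa [dist_eq_norm] using hF z)
    simpa [dist_eq_norm] using Metric.dist_le_diam_of_mem hbdd ⟨x, rfl⟩ ⟨y, rfl⟩
  · rw [hxy]
    refine Metric.diam_le_of_forall_dist_le (hxy ▸ norm_nonneg _ : (0 : ℝ) ≤ 2 * R) ?_
    rintro _ ⟨z, rfl⟩ _ ⟨w, rfl⟩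
    calc dist (F z) (F w) ≤ ‖F z - m‖ + ‖F w - m‖ := by
          simpa [dist_eq_norm] using dist_triangle_right (F z) (F w) m
      _ ≤ 2 * R := by linarith [hF z, hF w]

variable [CompactSpace X] [T2Space X]

theorem exists_abs_le_eq_neg_of_ne {x y : X} (hxy : x ≠ y) (D : C(X, ℝ))
    (hD : ∀ z, 0 ≤ D z) :
    ∃ p : C(X, ℝ), p x = D x ∧ p y = -D y ∧ ∀ z, |p z| ≤ D z := by
  obtain ⟨q, hqy, hqx, hq⟩ := exists_continuous_zero_one_of_isClosed isClosed_singleton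
    isClosed_singleton (Set.disjoint_singleton.2 hxy.symm)
  refine ⟨⟨fun z => (2 * q z - 1) * D z, by fun_prop⟩, by norm_num [hqx rfl],
    by norm_num [hqy rfl], fun z => ?_⟩
  have hqz := hq z
  have : |2 * q z - 1| ≤ 1 := abs_le.2 ⟨by linarith [hqz.1], by linarith [hqz.2]⟩
  simpa only [ContinuousMap.coe_mk, abs_mul, abs_of_nonneg (hD z), one_mul] using
    mul_le_mul_of_nonneg_right this (hD z)

theorem exists_mem_diamTriple_and_add_mem_diamTriple {x y : X} (hxy : x ≠ y) (f : C(X, ℂ)) :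
    ∃ G : C(X, ℂ), (x, y, G x - G y) ∈ diamTriple G ∧
      (x, y, (f + G) x - (f + G) y) ∈ diamTriple (f + G) := by
  set u := f x - f y
  set c := Complex.exp (u.arg * Complex.I)
  set m := (f x + f y) / 2
  set ρ := ‖u‖ / 2
  set R := ‖f‖ + ‖m‖
  have hc : ‖c‖ = 1 := Complex.norm_exp_ofReal_mul_I _
  have hu : u = (2 * ρ : ℝ) * c := by
    rw [show ((2 * ρ : ℝ) : ℂ) = ‖u‖ by push_cast [ρ]; ring]
    exact (Complex.norm_mul_exp_arg_mul_I u).symm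
  have hfR z : ‖f z - m‖ ≤ R :=
    (norm_sub_le _ _).trans (add_le_add_left (f.norm_coe_le_norm z) _)
  have hfx : ‖f x - m‖ = ρ := by
    rw [show f x - m = u / 2 by simp only [u, m]; ring, norm_div]; norm_num [ρ]
  have hfy : ‖f y - m‖ = ρ := by
    rw [show f y - m = -(u / 2) by simp only [u, m]; ring, norm_neg, norm_div]; norm_num [ρ]
  let D : C(X, ℝ) := ⟨fun z => min (R - ρ) (R - ‖f z - m‖), by fun_prop⟩
  have hD z : 0 ≤ D z := le_min (by linarith [hfR x]) (by linarith [hfR z])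
  have hDx : D x = R - ρ := by simp [D, hfx]
  have hDy : D y = R - ρ := by simp [D, hfy]
  obtain ⟨p, hpx, hpy, hp⟩ := exists_abs_le_eq_neg_of_ne hxy D hD
  let G : C(X, ℂ) := ⟨fun z => c * p z, by fun_prop⟩
  have hG z : ‖G z‖ = |p z| := by simp [G, hc]
  have hGxy : G x - G y = (2 * (R - ρ) : ℝ) * c := by
    simp only [G, ContinuousMap.coe_mk, hpx, hpy, hDx, hDy]; push_cast; ring
  refine ⟨G, mem_diamTriple_of_norm_sub_le (m := 0) (R := R - ρ) ?_ ?_,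
    mem_diamTriple_of_norm_sub_le (m := m) (R := R) ?_ ?_⟩
  · intro z
    rw [sub_zero, hG]
    exact (hp z).trans (min_le_left _ _)
  · rw [hGxy, norm_mul, hc, mul_one, Complex.norm_real,
      Real.norm_of_nonneg (by linarith [hD x, hDx])]
  · intro z
    calc ‖(f + G) z - m‖ ≤ ‖f z - m‖ + ‖G z‖ := by
          simpa [add_sub_right_comm] using norm_add_le (f z - m) (G z)
      _ ≤ ‖f z - m‖ + D z := by rw [hG]; gcongr; exact hp z
      _ ≤ R := by linarith [show D z ≤ R - ‖f z - m‖ from min_le_right _ _]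
  · have : (f + G) x - (f + G) y = (2 * R : ℝ) * c := by
      rw [ContinuousMap.add_apply, ContinuousMap.add_apply, add_sub_add_comm, hGxy]
      change u + _ = _
      rw [hu]; push_cast; ring
    rw [this, norm_mul, hc, mul_one, Complex.norm_real,
      Real.norm_of_nonneg (by linarith [hfR x, norm_nonneg (f x - m)])]

theorem map_sub_map_eq_mul_sub (φ : C(X, ℂ) →+ C(X, ℂ)) (g : X → X) (τ : ℂ)
    (hfor : ∀ (x y : X), x ≠ y → ∀ (u : ℂ) (f : C(X, ℂ)),
      (x, y, u) ∈ diamTriple f → (g x, g y, τ * u) ∈ diamTriple (φ f))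
    {x y : X} (hxy : x ≠ y) (f : C(X, ℂ)) :
    φ f (g x) - φ f (g y) = τ * (f x - f y) := by
  obtain ⟨G, hG, hfG⟩ := exists_mem_diamTriple_and_add_mem_diamTriple hxy f
  have hφG := (hfor x y hxy _ G hG).2
  have hφfG := (hfor x y hxy _ (f + G) hfG).2
  simp only [map_add, ContinuousMap.add_apply] at hφG hφfG
  linear_combination hφG - hφfG

theorem phi_comp_sub_tau_smul_constant_general
    {X : Type*} [TopologicalSpace X] [CompactSpace X] [T2Space X]
    (φ : C(X, ℂ) →ₗ[ℂ] C(X, ℂ))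
    (g : X → X)
    (τ : ℂ)
    (hfor : ∀ (x y : X), x ≠ y → ∀ (u : ℂ) (f : C(X, ℂ)),
      (x, y, u) ∈ diamTriple f → (g x, g y, τ * u) ∈ diamTriple (φ f)) :
    ∀ f : C(X, ℂ), ∃ c : ℂ, ∀ x : X, φ f (g x) - τ * f x = c := by
  intro f
  rcases isEmpty_or_nonempty X with _ | ⟨⟨x₀⟩⟩
  · exact ⟨0, isEmptyElim⟩
  refine ⟨φ f (g x₀) - τ * f x₀, fun x => ?_⟩
  rcases eq_or_ne x x₀ with rfl | hx
  · rfl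
  · have key : φ f (g x) - φ f (g x₀) = τ * (f x - f x₀) :=
      map_sub_map_eq_mul_sub φ.toAddMonoidHom g τ hfor hx f
    linear_combination key

/-- Step 9: for every `f ∈ C(X,ℂ)`, the function `x ↦ φ(f)(g(x)) - τ·f(x)` is
constant. -/
theorem phi_comp_sub_tau_smul_constant
    {X : Type*} [TopologicalSpace X] [CompactSpace X] [T2Space X]
    [FirstCountableTopology X]
    (h3 : ∃ a b c : X, a ≠ b ∧ a ≠ c ∧ b ≠ c)
    (φ : C(X, ℂ) →ₗ[ℂ] C(X, ℂ)) (hbij : Function.Bijective φ)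
    (hdp : DiamPreserving (⇑φ))
    (g : X → X) (hg : Function.Bijective g)
    (τ : ℂ) (hτ : ‖τ‖ = 1)
    (hfor : ∀ (x y : X), x ≠ y → ∀ (u : ℂ) (f : C(X, ℂ)),
      (x, y, u) ∈ diamTriple f → (g x, g y, τ * u) ∈ diamTriple (φ f)) :
    ∀ f : C(X, ℂ), ∃ c : ℂ, ∀ x : X, φ f (g x) - τ * f x = c :=
  phi_comp_sub_tau_smul_constant_general φ g τ hfor
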